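/- Let (V, g, J) be a 6-dimensional real inner product space with compatible complex structure J, Ω⁺ a 3-form with Ω⁺(X,Y,Z) = -Ω⁺(X,JY,JZ), and η a 3-form satisfying η(X,Y,Z) = η(JX,JY,Z) + η(JX,Y,JZ) + η(X,JY,JZ). Then for all vectors u,v: Σ_{p,q} η(Ju, e_p, e_q) Ω⁺(v, Je_p, e_q) = -Σ_{p,q} η(u, e_p, e_q) Ω⁺(v, e_p, e_q), where {e_p} is an orthonormal basis. -/

import Mathlib

open RealInnerProductSpace

section
variable {V : Type} [NormedAddCommGroup V] [InnerProductSpace ℝ V]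

lemma upd1' (a c x y : V) : Function.update ![a, y, c] 1 x = ![a, x, c] := by
  ext i; fin_cases i <;> simp [Function.update]

lemma upd2' (a c x y : V) : Function.update ![a, c, y] 2 x = ![a, c, x] := by
  ext i; fin_cases i <;> simp [Function.update]

def sl1 (m : AlternatingMap ℝ V ℝ (Fin 3)) (a c : V) : V →ₗ[ℝ] ℝ where
  toFun x := m ![a, x, c]
  map_add' x y := by
    have := m.toMultilinearMap.map_update_add ![a, 0, c] 1 x y
    simpa [upd1'] using this
  map_smul' r x := by
    have := m.toMultilinearMap.map_update_smul ![a, 0, c] 1 r x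
    simpa [upd1'] using this

def sl2 (m : AlternatingMap ℝ V ℝ (Fin 3)) (a c : V) : V →ₗ[ℝ] ℝ where
  toFun x := m ![a, c, x]
  map_add' x y := by
    have := m.toMultilinearMap.map_update_add ![a, c, 0] 2 x y
    simpa [upd2'] using this
  map_smul' r x := by
    have := m.toMultilinearMap.map_update_smul ![a, c, 0] 2 r x
    simpa [upd2'] using this

@[simp] lemma sl1_apply (m : AlternatingMap ℝ V ℝ (Fin 3)) (a c x : V) :
    sl1 m a c x = m ![a, x, c] := rfl

@[simp] lemma sl2_apply (m : AlternatingMap ℝ V ℝ (Fin 3)) (a c x : V) :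
    sl2 m a c x = m ![a, c, x] := rfl

lemma swap12 (m : AlternatingMap ℝ V ℝ (Fin 3)) (a x y : V) :
    m ![a, y, x] = -m ![a, x, y] := by
  have h : ![a, y, x] = ![a, x, y] ∘ Equiv.swap (1 : Fin 3) 2 := by
    ext i; fin_cases i <;> simp [Equiv.swap_apply_def]
  rw [h, m.map_swap _ (by decide : (1 : Fin 3) ≠ 2)]

lemma riesz' (b : OrthonormalBasis (Fin 6) ℝ V) (f : V →ₗ[ℝ] ℝ) :
    ∃ a : V, ∀ x, f x = ⟪a, x⟫ := by
  refine ⟨∑ q, f (b q) • b q, fun x => ?_⟩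
  rw [sum_inner]
  conv_lhs => rw [← b.sum_repr x]
  rw [map_sum]
  refine Finset.sum_congr rfl fun q _ => ?_
  rw [map_smul, real_inner_smul_left, b.repr_apply_apply]
  simp [real_inner_comm, mul_comm]

lemma sumJ (b : OrthonormalBasis (Fin 6) ℝ V) (J : V →ₗ[ℝ] V)
    (hJ2 : ∀ x : V, J (J x) = -x) (hJg : ∀ x y : V, ⟪J x, J y⟫ = ⟪x, y⟫)
    (f g : V →ₗ[ℝ] ℝ) :
    ∑ p : Fin 6, f (J (b p)) * g (J (b p)) = ∑ p : Fin 6, f (b p) * g (b p) := by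
  obtain ⟨a, ha⟩ := riesz' b f
  obtain ⟨c, hc⟩ := riesz' b g
  have hJa : ∀ x y : V, ⟪x, J y⟫ = -⟪J x, y⟫ := by
    intro x y
    have h := hJg (J x) y
    rw [hJ2, inner_neg_left] at h
    linarith
  calc ∑ p : Fin 6, f (J (b p)) * g (J (b p))
      = ∑ p : Fin 6, ⟪J a, b p⟫ * ⟪b p, J c⟫ := by
        refine Finset.sum_congr rfl fun p _ => ?_
        rw [ha, hc, hJa a (b p), hJa c (b p), real_inner_comm (b p) (J c)]
        ring
    _ = ⟪J a, J c⟫ := b.sum_inner_mul_inner _ _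
    _ = ⟪a, c⟫ := hJg a c
    _ = ∑ p : Fin 6, ⟪a, b p⟫ * ⟪b p, c⟫ := (b.sum_inner_mul_inner a c).symm
    _ = ∑ p : Fin 6, f (b p) * g (b p) := by
        refine Finset.sum_congr rfl fun p _ => ?_
        rw [ha, hc, real_inner_comm (b p) c]

end

/-- On a 6-dimensional real inner product space with compatible complex
structure `J`, with `Ω⁺` a 3-form satisfying `Ω⁺(X,Y,Z) = -Ω⁺(X,JY,JZ)` and `η` a
3-form satisfying `η(X,Y,Z) = η(JX,JY,Z) + η(JX,Y,JZ) + η(X,JY,JZ)`, for all `u, v`: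
`Σ_{p,q} η(Ju,e_p,e_q) Ω⁺(v,Je_p,e_q) = -Σ_{p,q} η(u,e_p,e_q) Ω⁺(v,e_p,e_q)`. -/

theorem stmt11 {V : Type} [NormedAddCommGroup V] [InnerProductSpace ℝ V]
    (b : OrthonormalBasis (Fin 6) ℝ V)
    (J : V →ₗ[ℝ] V)
    (hJ2 : ∀ x : V, J (J x) = -x)
    (hJg : ∀ x y : V, ⟪J x, J y⟫ = ⟪x, y⟫)
    (Ω : AlternatingMap ℝ V ℝ (Fin 3))
    (hΩ : ∀ x y z : V, Ω ![x, y, z] = -Ω ![x, J y, J z])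
    (η : AlternatingMap ℝ V ℝ (Fin 3))
    (hη : ∀ x y z : V,
      η ![x, y, z] = η ![J x, J y, z] + η ![J x, y, J z] + η ![x, J y, J z]) :
    ∀ u v : V,
      ∑ p : Fin 6, ∑ q : Fin 6, η ![J u, b p, b q] * Ω ![v, J (b p), b q]
      = -∑ p : Fin 6, ∑ q : Fin 6, η ![u, b p, b q] * Ω ![v, b p, b q] := by
  intro u v
  have neg1 : ∀ (m : AlternatingMap ℝ V ℝ (Fin 3)) (a c x : V),
      m ![a, -x, c] = -m ![a, x, c] := fun m a c x => by
    simpa using (sl1 m a c).map_neg x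
  have neg2 : ∀ (m : AlternatingMap ℝ V ℝ (Fin 3)) (a c x : V),
      m ![a, c, -x] = -m ![a, c, x] := fun m a c x => by
    simpa using (sl2 m a c).map_neg x
  -- T1 = -L (reindex p ↦ J p)
  have hT1 : ∑ p : Fin 6, ∑ q : Fin 6, η ![J u, J (b p), b q] * Ω ![v, b p, b q]
      = -∑ p : Fin 6, ∑ q : Fin 6, η ![J u, b p, b q] * Ω ![v, J (b p), b q] := by
    rw [Finset.sum_comm, show (∑ p : Fin 6, ∑ q : Fin 6,
        η ![J u, b p, b q] * Ω ![v, J (b p), b q]) = ∑ q : Fin 6, ∑ p : Fin 6,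
        η ![J u, b p, b q] * Ω ![v, J (b p), b q] from Finset.sum_comm, ← Finset.sum_neg_distrib]
    refine Finset.sum_congr rfl fun q _ => ?_
    have h := sumJ b J hJ2 hJg ((sl1 η (J u) (b q)).comp J) (sl1 Ω v (b q))
    simp only [LinearMap.comp_apply, sl1_apply] at h
    rw [← h, ← Finset.sum_neg_distrib]
    refine Finset.sum_congr rfl fun p _ => ?_
    rw [hJ2 (b p), neg1]
    ring
  -- T2 = -L (reindex q ↦ J q, then swap names and use antisymmetry)
  have hT2 : ∑ p : Fin 6, ∑ q : Fin 6, η ![J u, b p, J (b q)] * Ω ![v, b p, b q]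
      = -∑ p : Fin 6, ∑ q : Fin 6, η ![J u, b p, b q] * Ω ![v, J (b p), b q] := by
    have step1 : ∀ p : Fin 6, ∑ q : Fin 6, η ![J u, b p, J (b q)] * Ω ![v, b p, b q]
        = -∑ q : Fin 6, η ![J u, b p, b q] * Ω ![v, b p, J (b q)] := by
      intro p
      have h := sumJ b J hJ2 hJg ((sl2 η (J u) (b p)).comp J) (sl2 Ω v (b p))
      simp only [LinearMap.comp_apply, sl2_apply] at h
      rw [← h, ← Finset.sum_neg_distrib]
      refine Finset.sum_congr rfl fun q _ => ?_
      rw [hJ2 (b q), neg2]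
      ring
    calc ∑ p : Fin 6, ∑ q : Fin 6, η ![J u, b p, J (b q)] * Ω ![v, b p, b q]
        = -∑ p : Fin 6, ∑ q : Fin 6, η ![J u, b p, b q] * Ω ![v, b p, J (b q)] := by
          rw [← Finset.sum_neg_distrib]
          exact Finset.sum_congr rfl fun p _ => step1 p
      _ = -∑ p : Fin 6, ∑ q : Fin 6, η ![J u, b p, b q] * Ω ![v, J (b p), b q] := by
          congr 1
          rw [Finset.sum_comm]
          refine Finset.sum_congr rfl fun p _ => Finset.sum_congr rfl fun q _ => ?_
          rw [show η ![J u, b q, b p] = -η ![J u, b p, b q] from swap12 η _ _ _,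
            show Ω ![v, b q, J (b p)] = -Ω ![v, J (b p), b q] from swap12 Ω _ _ _]
          ring
  -- T3 = -S (reindex both, use hΩ)
  have hT3 : ∑ p : Fin 6, ∑ q : Fin 6, η ![u, J (b p), J (b q)] * Ω ![v, b p, b q]
      = -∑ p : Fin 6, ∑ q : Fin 6, η ![u, b p, b q] * Ω ![v, b p, b q] := by
    have step1 : ∀ q : Fin 6, ∑ p : Fin 6, η ![u, J (b p), J (b q)] * Ω ![v, b p, b q]
        = -∑ p : Fin 6, η ![u, b p, J (b q)] * Ω ![v, J (b p), b q] := by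
      intro q
      have h := sumJ b J hJ2 hJg ((sl1 η u (J (b q))).comp J) (sl1 Ω v (b q))
      simp only [LinearMap.comp_apply, sl1_apply] at h
      rw [← h, ← Finset.sum_neg_distrib]
      refine Finset.sum_congr rfl fun p _ => ?_
      rw [hJ2 (b p), neg1]
      ring
    have step2 : ∀ p : Fin 6, ∑ q : Fin 6, η ![u, b p, J (b q)] * Ω ![v, J (b p), b q]
        = ∑ q : Fin 6, η ![u, b p, b q] * Ω ![v, b p, b q] := by
      intro p
      have h := sumJ b J hJ2 hJg (sl2 η u (b p)) ((sl2 Ω v (J (b p))).comp J)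
      simp only [LinearMap.comp_apply, sl2_apply] at h
      have e1 : ∑ q : Fin 6, η ![u, b p, J (b q)] * Ω ![v, J (b p), b q]
          = -∑ q : Fin 6, η ![u, b p, J (b q)] * Ω ![v, J (b p), J (J (b q))] := by
        rw [← Finset.sum_neg_distrib]
        refine Finset.sum_congr rfl fun q _ => ?_
        rw [hJ2 (b q), neg2]
        ring
      rw [e1, h, ← Finset.sum_neg_distrib]
      refine Finset.sum_congr rfl fun q _ => ?_
      rw [hΩ v (b p) (b q)]
      ring
    calc ∑ p : Fin 6, ∑ q : Fin 6, η ![u, J (b p), J (b q)] * Ω ![v, b p, b q]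
        = ∑ q : Fin 6, ∑ p : Fin 6, η ![u, J (b p), J (b q)] * Ω ![v, b p, b q] :=
          Finset.sum_comm
      _ = -∑ q : Fin 6, ∑ p : Fin 6, η ![u, b p, J (b q)] * Ω ![v, J (b p), b q] := by
          rw [← Finset.sum_neg_distrib]
          exact Finset.sum_congr rfl fun q _ => step1 q
      _ = -∑ p : Fin 6, ∑ q : Fin 6, η ![u, b p, J (b q)] * Ω ![v, J (b p), b q] := by
          rw [Finset.sum_comm]
      _ = -∑ p : Fin 6, ∑ q : Fin 6, η ![u, b p, b q] * Ω ![v, b p, b q] := by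
          congr 1
          exact Finset.sum_congr rfl fun p _ => step2 p
  -- S = T1 + T2 + T3 from hη
  have hS : ∑ p : Fin 6, ∑ q : Fin 6, η ![u, b p, b q] * Ω ![v, b p, b q]
      = (∑ p : Fin 6, ∑ q : Fin 6, η ![J u, J (b p), b q] * Ω ![v, b p, b q])
      + (∑ p : Fin 6, ∑ q : Fin 6, η ![J u, b p, J (b q)] * Ω ![v, b p, b q])
      + (∑ p : Fin 6, ∑ q : Fin 6, η ![u, J (b p), J (b q)] * Ω ![v, b p, b q]) := by
    rw [← Finset.sum_add_distrib, ← Finset.sum_add_distrib]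
    refine Finset.sum_congr rfl fun p _ => ?_
    rw [← Finset.sum_add_distrib, ← Finset.sum_add_distrib]
    refine Finset.sum_congr rfl fun q _ => ?_
    rw [hη u (b p) (b q)]
    ring
  linarith [hS, hT1, hT2, hT3]
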